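/- arXiv:1807.10379 — 5 statements merged into one kernel-verified Lean document; each statement's English description precedes it below -/
import Mathlib

section
/- Let h and δh be Hermitian operators on a finite-dimensional complex inner product space, with δh positive semi-definite with operator norm ‖δh‖, and suppose h has ground energy e₀ with ground space S₀ and first excited energy e₁ > e₀. Then every eigenvalue of h + δh is at least min over unit vectors ψ₀ ∈ S₀ of e₀ + (e₁−e₀)⟨ψ₀, δh ψ₀⟩ / ((e₁−e₀) + ⟨ψ₀, δh ψ₀⟩ + ‖δh‖). -/
/-!
Let `v` be a unit eigenvector of `h + δh` with eigenvalue `μ`; if `μ ≥ e₁` any ground state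
`ψ₀` will do, since the bound never exceeds `e₁`. Otherwise the gap forces `v ∉ S₀ᗮ`, so
`v = α ψ₀ + w` with `ψ₀ ∈ S₀` a unit vector, `α > 0` and `w ⊥ S₀`. Projecting the eigenvalue
equation onto `ψ₀` gives `⟪ψ₀, δh w⟫ = α (μ - e₀ - d)` with `d = ⟪ψ₀, δh ψ₀⟫`; projecting it onto
`w` and using `⟪w, h w⟫ ≥ e₁ ‖w‖²` gives a second relation. Cauchy–Schwarz for the positive form
`⟪·, δh ·⟫` and `⟪w, δh w⟫ ≤ ‖δh‖ ‖w‖²` then leave real inequalities in `α`, `‖w‖` and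
`⟪w, δh w⟫` that force `(e₁ - e₀) d ≤ (μ - e₀) (e₁ - e₀ + d + ‖δh‖)`.
-/

open scoped InnerProductSpace
open RCLike Module.End

theorem two_level_gap_inequality {Δ D m d t α β : ℝ} (hΔ : 0 ≤ Δ) (hm : 0 ≤ m) (hd : 0 ≤ d)
    (hD : 0 ≤ D) (hα : α ≠ 0) (hw : Δ * β ^ 2 + α ^ 2 * (m - d) + t ≤ m * β ^ 2)
    (hcs : (α * (m - d)) ^ 2 ≤ d * t) (ht : t ≤ D * β ^ 2) :
    Δ * d ≤ m * (Δ + d + D) := by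
  rcases le_or_gt d m with hdm | hmd
  · nlinarith [mul_nonneg hm (add_nonneg hd hD)]
  have hα2 : 0 < α ^ 2 := by positivity
  have key : (d - m) * (Δ - m) * β ^ 2 ≤ m * D * β ^ 2 := by
    nlinarith [mul_le_mul_of_nonneg_left hw (sub_nonneg.mpr hmd.le),
      mul_le_mul_of_nonneg_left ht hm]
  rcases eq_or_lt_of_le (sq_nonneg β) with hβ | hβ
  · rw [← hβ, mul_zero] at ht
    nlinarith [mul_pos hα2 (mul_pos (sub_pos.mpr hmd) (sub_pos.mpr hmd))]
  · nlinarith [le_of_mul_le_mul_right key hβ]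

theorem Module.End.HasEigenvalue.exists_mem_eigenspace_norm_eq_one {𝕜 E : Type*} [RCLike 𝕜]
    [NormedAddCommGroup E] [NormedSpace 𝕜 E] {f : Module.End 𝕜 E} {μ : 𝕜}
    (hμ : HasEigenvalue f μ) : ∃ v ∈ eigenspace f μ, ‖v‖ = 1 := by
  obtain ⟨v, hv, hv0⟩ := hμ.exists_hasEigenvector
  exact ⟨(‖v‖⁻¹ : 𝕜) • v, Submodule.smul_mem _ _ hv, norm_smul_inv_norm hv0⟩

theorem Submodule.exists_eq_smul_add_of_notMem_orthogonal {𝕜 E : Type*} [RCLike 𝕜]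
    [NormedAddCommGroup E] [InnerProductSpace 𝕜 E] (K : Submodule 𝕜 E)
    [K.HasOrthogonalProjection] {v : E} (hv : v ∉ Kᗮ) :
    ∃ ψ ∈ K, ‖ψ‖ = 1 ∧ ∃ α : ℝ, 0 < α ∧ ∃ w ∈ Kᗮ, v = (α : 𝕜) • ψ + w := by
  set u := K.starProjection v
  have hu : u ≠ 0 := mt K.starProjection_apply_eq_zero_iff.mp hv
  have hα : (‖u‖ : 𝕜) ≠ 0 := ofReal_ne_zero.mpr (norm_ne_zero_iff.mpr hu)
  refine ⟨(‖u‖⁻¹ : 𝕜) • u, K.smul_mem _ (K.starProjection_apply_mem v), norm_smul_inv_norm hu,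
    ‖u‖, norm_pos_iff.mpr hu, v - u, K.sub_starProjection_mem_orthogonal v, ?_⟩
  rw [smul_inv_smul₀ hα, add_sub_cancel]

section Spectral

variable {𝕜 E : Type*} [RCLike 𝕜] [NormedAddCommGroup E] [InnerProductSpace 𝕜 E]
  [FiniteDimensional 𝕜 E] {T : E →ₗ[𝕜] E}

theorem LinearMap.IsSymmetric.re_inner_apply_self_eq_sum (hT : T.IsSymmetric) {n : ℕ}
    (hn : Module.finrank 𝕜 E = n) (x : E) :
    re ⟪x, T x⟫_𝕜 = ∑ i, hT.eigenvalues hn i * ‖⟪hT.eigenvectorBasis hn i, x⟫_𝕜‖ ^ 2 := by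
  rw [← (hT.eigenvectorBasis hn).sum_inner_mul_inner x (T x), map_sum]
  refine Finset.sum_congr rfl fun i _ => ?_
  rw [← hT, apply_eigenvectorBasis, inner_smul_real_left, real_smul_eq_coe_mul, mul_left_comm,
    re_ofReal_mul, inner_mul_symm_re_eq_norm, norm_mul, norm_inner_symm, sq]

theorem LinearMap.IsSymmetric.mul_norm_sq_le_re_inner_of_mem_orthogonal_eigenspace
    (hT : T.IsSymmetric) {e₀ e₁ : ℝ} (hgap : ∀ μ : ℝ, HasEigenvalue T μ → μ ≠ e₀ → e₁ ≤ μ)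
    {x : E} (hx : x ∈ (eigenspace T (e₀ : 𝕜))ᗮ) : e₁ * ‖x‖ ^ 2 ≤ re ⟪x, T x⟫_𝕜 := by
  rw [hT.re_inner_apply_self_eq_sum rfl, ← (hT.eigenvectorBasis rfl).sum_sq_norm_inner_right,
    Finset.mul_sum]
  refine Finset.sum_le_sum fun i _ => ?_
  by_cases hi : hT.eigenvalues rfl i = e₀
  · have hmem : hT.eigenvectorBasis rfl i ∈ eigenspace T (e₀ : 𝕜) := by
      rw [mem_eigenspace_iff, apply_eigenvectorBasis, hi]
    simp [(Submodule.mem_orthogonal _ x).mp hx _ hmem]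
  · exact mul_le_mul_of_nonneg_right (hgap _ (hT.hasEigenvalue_eigenvalues rfl i) hi) (sq_nonneg _)

end Spectral

section Perturbation

variable {E : Type*} [NormedAddCommGroup E] [InnerProductSpace ℂ E] [CompleteSpace E]

theorem ContinuousLinearMap.IsPositive.norm_inner_sq_le {T : E →L[ℂ] E} (hT : T.IsPositive)
    (x y : E) : ‖⟪x, T y⟫_ℂ‖ ^ 2 ≤ re ⟪x, T x⟫_ℂ * re ⟪y, T y⟫_ℂ := by
  obtain ⟨S, rfl⟩ := CStarAlgebra.nonneg_iff_eq_star_mul_self.mp (T.nonneg_iff_isPositive.mpr hT)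
  have hS : ∀ a b : E, ⟪a, (star S * S) b⟫_ℂ = ⟪S a, S b⟫_ℂ := fun a b => by
    rw [star_eq_adjoint]
    exact adjoint_inner_right S a (S b)
  simp only [hS, inner_self_eq_norm_sq, ← mul_pow]
  gcongr
  exact norm_inner_le_norm _ _

variable {h δh : E →L[ℂ] E} {ψ w : E} {e₀ e₁ α μ : ℝ}

theorem inner_apply_eq_of_apply_smul_add_eq (hh : IsSelfAdjoint h) (hδh : IsSelfAdjoint δh)
    (hψ : h ψ = (e₀ : ℂ) • ψ) (hψ1 : ‖ψ‖ = 1) (hψw : ⟪ψ, w⟫_ℂ = 0)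
    (hv : (h + δh) ((α : ℂ) • ψ + w) = (μ : ℂ) • ((α : ℂ) • ψ + w)) :
    ⟪ψ, δh w⟫_ℂ = (α * (μ - e₀ - (⟪ψ, δh ψ⟫_ℂ).re) : ℝ) := by
  have hψψ : ⟪ψ, ψ⟫_ℂ = 1 := by rw [inner_self_eq_norm_sq_to_K, hψ1]; simp
  have hd : ((⟪ψ, δh ψ⟫_ℂ).re : ℂ) = ⟪ψ, δh ψ⟫_ℂ := hδh.isSymmetric.coe_re_inner_self_apply ψ
  have hψh : ∀ x, ⟪ψ, h x⟫_ℂ = e₀ * ⟪ψ, x⟫_ℂ := fun x => by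
    rw [← hh.isSymmetric.apply_clm, hψ, inner_smul_left, Complex.conj_ofReal]
  have := congrArg (⟪ψ, ·⟫_ℂ) hv
  simp only [add_apply, map_add, map_smul, inner_add_right, inner_smul_right,
    hψh, hψw, hψψ] at this
  push_cast
  linear_combination this + α * hd

theorem re_inner_apply_eq_of_apply_smul_add_eq (hh : IsSelfAdjoint h) (hδh : IsSelfAdjoint δh)
    (hψ : h ψ = (e₀ : ℂ) • ψ) (hψ1 : ‖ψ‖ = 1) (hψw : ⟪ψ, w⟫_ℂ = 0)
    (hv : (h + δh) ((α : ℂ) • ψ + w) = (μ : ℂ) • ((α : ℂ) • ψ + w)) :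
    (⟪w, h w⟫_ℂ).re + α ^ 2 * (μ - e₀ - (⟪ψ, δh ψ⟫_ℂ).re) + (⟪w, δh w⟫_ℂ).re = μ * ‖w‖ ^ 2 := by
  have hwψ : ⟪w, ψ⟫_ℂ = 0 := inner_eq_zero_symm.mp hψw
  have hwh : ⟪w, h ψ⟫_ℂ = 0 := by rw [hψ, inner_smul_right, hwψ, mul_zero]
  have hwδh : ⟪w, δh ψ⟫_ℂ = (α * (μ - e₀ - (⟪ψ, δh ψ⟫_ℂ).re) : ℝ) := by
    rw [← inner_conj_symm, hδh.isSymmetric.apply_clm,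
      inner_apply_eq_of_apply_smul_add_eq hh hδh hψ hψ1 hψw hv, Complex.conj_ofReal]
  have := congrArg (⟪w, ·⟫_ℂ) hv
  simp only [add_apply, map_add, map_smul, inner_add_right, inner_smul_right, hwh, hwδh, hwψ,
    inner_self_eq_norm_sq_to_K] at this
  have hre : (((⟪w, h w⟫_ℂ).re + α ^ 2 * (μ - e₀ - (⟪ψ, δh ψ⟫_ℂ).re) + (⟪w, δh w⟫_ℂ).re : ℝ) : ℂ)
      = (μ * ‖w‖ ^ 2 : ℝ) := by
    have hwhw : ((⟪w, h w⟫_ℂ).re : ℂ) = ⟪w, h w⟫_ℂ := hh.isSymmetric.coe_re_inner_self_apply w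
    have hwδw : ((⟪w, δh w⟫_ℂ).re : ℂ) = ⟪w, δh w⟫_ℂ := hδh.isSymmetric.coe_re_inner_self_apply w
    push_cast at this ⊢
    linear_combination this + hwhw + hwδw
  exact_mod_cast hre

theorem gap_mul_re_inner_le_of_apply_smul_add_eq (hh : IsSelfAdjoint h) (hδh : δh.IsPositive)
    (hψ : h ψ = (e₀ : ℂ) • ψ) (hψ1 : ‖ψ‖ = 1) (hψw : ⟪ψ, w⟫_ℂ = 0)
    (hw : e₁ * ‖w‖ ^ 2 ≤ (⟪w, h w⟫_ℂ).re) (hα : α ≠ 0) (he : e₀ ≤ e₁) (hμ : e₀ ≤ μ)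
    (hv : (h + δh) ((α : ℂ) • ψ + w) = (μ : ℂ) • ((α : ℂ) • ψ + w)) :
    (e₁ - e₀) * (⟪ψ, δh ψ⟫_ℂ).re ≤ (μ - e₀) * ((e₁ - e₀) + (⟪ψ, δh ψ⟫_ℂ).re + ‖δh‖) := by
  have hcs : ‖⟪ψ, δh w⟫_ℂ‖ ^ 2 ≤ (⟪ψ, δh ψ⟫_ℂ).re * (⟪w, δh w⟫_ℂ).re :=
    hδh.norm_inner_sq_le ψ w
  rw [inner_apply_eq_of_apply_smul_add_eq hh hδh.isSelfAdjoint hψ hψ1 hψw hv, Complex.norm_real,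
    Real.norm_eq_abs, sq_abs] at hcs
  refine two_level_gap_inequality (β := ‖w‖) (sub_nonneg.mpr he) (sub_nonneg.mpr hμ)
    (hδh.re_inner_nonneg_right ψ) (norm_nonneg δh) hα ?_ hcs ?_
  · linarith [re_inner_apply_eq_of_apply_smul_add_eq hh hδh.isSelfAdjoint hψ hψ1 hψw hv]
  · calc (⟪w, δh w⟫_ℂ).re ≤ ‖w‖ * ‖δh w‖ := re_inner_le_norm (𝕜 := ℂ) w (δh w)
      _ ≤ ‖w‖ * (‖δh‖ * ‖w‖) := by gcongr; exact δh.le_opNorm w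
      _ = ‖δh‖ * ‖w‖ ^ 2 := by ring

theorem exists_mem_eigenspace_gap_mul_re_inner_le [FiniteDimensional ℂ E]
    (hh : IsSelfAdjoint h) (hδh : δh.IsPositive) (he : e₀ ≤ e₁)
    (he₀ : HasEigenvalue (h : E →ₗ[ℂ] E) e₀) (hPSD : ∀ x, e₀ * ‖x‖ ^ 2 ≤ (⟪x, h x⟫_ℂ).re)
    (hfirst : ∀ μ : ℝ, HasEigenvalue (h : E →ₗ[ℂ] E) μ → μ ≠ e₀ → e₁ ≤ μ)
    (hμ : HasEigenvalue ((h + δh : E →L[ℂ] E) : E →ₗ[ℂ] E) μ) :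
    ∃ ψ ∈ eigenspace (h : E →ₗ[ℂ] E) e₀, ‖ψ‖ = 1 ∧
      (e₁ - e₀) * (⟪ψ, δh ψ⟫_ℂ).re ≤ (μ - e₀) * ((e₁ - e₀) + (⟪ψ, δh ψ⟫_ℂ).re + ‖δh‖) := by
  obtain ⟨v, hv, hv1⟩ := hμ.exists_mem_eigenspace_norm_eq_one
  replace hv : (h + δh) v = (μ : ℂ) • v := mem_eigenspace_iff.mp hv
  have hμv : (⟪v, h v⟫_ℂ).re + (⟪v, δh v⟫_ℂ).re = μ := by
    have := congrArg (fun x => (⟪v, x⟫_ℂ).re) hv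
    simpa [inner_add_right, inner_smul_right, inner_self_eq_norm_sq_to_K, hv1] using this
  have hδv : 0 ≤ (⟪v, δh v⟫_ℂ).re := hδh.re_inner_nonneg_right v
  have hμ₀ : e₀ ≤ μ := by
    have := hPSD v
    rw [hv1, one_pow, mul_one] at this
    linarith
  by_cases hμ₁ : e₁ ≤ μ
  · obtain ⟨ψ, hψ, hψ1⟩ := he₀.exists_mem_eigenspace_norm_eq_one
    have hd : 0 ≤ (⟪ψ, δh ψ⟫_ℂ).re := hδh.re_inner_nonneg_right ψ
    exact ⟨ψ, hψ, hψ1, by nlinarith [norm_nonneg δh]⟩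
  have hvS : v ∉ (eigenspace (h : E →ₗ[ℂ] E) e₀)ᗮ := fun hvS => hμ₁ <| by
    have hgap : e₁ * ‖v‖ ^ 2 ≤ (⟪v, h v⟫_ℂ).re :=
      hh.isSymmetric.mul_norm_sq_le_re_inner_of_mem_orthogonal_eigenspace hfirst hvS
    rw [hv1, one_pow, mul_one] at hgap
    linarith
  obtain ⟨ψ, hψ, hψ1, α, hα, w, hw, rfl⟩ := Submodule.exists_eq_smul_add_of_notMem_orthogonal _ hvS
  exact ⟨ψ, hψ, hψ1, gap_mul_re_inner_le_of_apply_smul_add_eq hh hδh (mem_eigenspace_iff.mp hψ)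
    hψ1 ((Submodule.mem_orthogonal _ w).mp hw ψ hψ)
    (hh.isSymmetric.mul_norm_sq_le_re_inner_of_mem_orthogonal_eigenspace hfirst hw) hα.ne' he hμ₀
    hv⟩

end Perturbation

theorem eigenvalue_bound_sum_of_hamiltonians_general
    {n : ℕ} (h δh : EuclideanSpace ℂ (Fin n) →L[ℂ] EuclideanSpace ℂ (Fin n))
    (hh : IsSelfAdjoint h) (hδh : IsSelfAdjoint δh)
    (hδhpos : ∀ x, 0 ≤ (⟪x, δh x⟫_ℂ).re)
    (e₀ e₁ : ℝ)
    (he₀ : Module.End.HasEigenvalue (h : EuclideanSpace ℂ (Fin n) →ₗ[ℂ] EuclideanSpace ℂ (Fin n)) (e₀ : ℂ))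
    (hPSD : ∀ x, e₀ * ‖x‖ ^ 2 ≤ (⟪x, h x⟫_ℂ).re)
    (hgap : e₀ < e₁)
    (hfirst : ∀ μ : ℝ,
      Module.End.HasEigenvalue (h : EuclideanSpace ℂ (Fin n) →ₗ[ℂ] EuclideanSpace ℂ (Fin n)) (μ : ℂ) →
      μ ≠ e₀ → e₁ ≤ μ) :
    ∀ μ : ℝ,
      Module.End.HasEigenvalue
        ((h + δh : EuclideanSpace ℂ (Fin n) →L[ℂ] EuclideanSpace ℂ (Fin n)) :
          EuclideanSpace ℂ (Fin n) →ₗ[ℂ] EuclideanSpace ℂ (Fin n)) (μ : ℂ) →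
      ∃ ψ₀ ∈ Module.End.eigenspace
          (h : EuclideanSpace ℂ (Fin n) →ₗ[ℂ] EuclideanSpace ℂ (Fin n)) (e₀ : ℂ),
        ‖ψ₀‖ = 1 ∧
        e₀ + (e₁ - e₀) * (⟪ψ₀, δh ψ₀⟫_ℂ).re /
          ((e₁ - e₀) + (⟪ψ₀, δh ψ₀⟫_ℂ).re + ‖δh‖) ≤ μ := by
  intro μ hμ
  have hδh' : δh.IsPositive := ContinuousLinearMap.isPositive_def'.mpr ⟨hδh, fun x => by
    rw [ContinuousLinearMap.reApplyInnerSelf_apply, inner_re_symm]; exact hδhpos x⟩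
  obtain ⟨ψ₀, hψ₀, hψ₀1, hle⟩ :=
    exists_mem_eigenspace_gap_mul_re_inner_le hh hδh' hgap.le he₀ hPSD hfirst hμ
  have hpos : 0 < (e₁ - e₀) + (⟪ψ₀, δh ψ₀⟫_ℂ).re + ‖δh‖ := by
    linarith [hδhpos ψ₀, norm_nonneg δh]
  exact ⟨ψ₀, hψ₀, hψ₀1, by rw [← le_sub_iff_add_le', div_le_iff₀ hpos]; exact hle⟩

/-- **Eigenvalue bound for a sum of Hamiltonians.**
Let `h` and `δh` be self-adjoint operators on a finite-dimensional complex Hilbert space,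
with `δh` positive semi-definite, `h - e₀` positive semi-definite, `e₀` an eigenvalue of `h`
with eigenspace `S₀`, and `e₁ > e₀` the first excited energy (every eigenvalue other than
`e₀` is at least `e₁`).  Then every eigenvalue `μ` of `h + δh` is at least the minimum over
unit vectors `ψ₀ ∈ S₀` of
`e₀ + (e₁ - e₀)⟨ψ₀, δh ψ₀⟩ / ((e₁ - e₀) + ⟨ψ₀, δh ψ₀⟩ + ‖δh‖)`,
expressed here as: for every eigenvalue `μ` there exists a unit vector `ψ₀ ∈ S₀`
achieving the bound. -/
theorem eigenvalue_bound_sum_of_hamiltonians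
    {n : ℕ} (h δh : EuclideanSpace ℂ (Fin n) →L[ℂ] EuclideanSpace ℂ (Fin n))
    (hh : IsSelfAdjoint h) (hδh : IsSelfAdjoint δh)
    (hδhpos : ∀ x, 0 ≤ (⟪x, δh x⟫_ℂ).re)
    (e₀ e₁ : ℝ)
    (he₀ : Module.End.HasEigenvalue (h : EuclideanSpace ℂ (Fin n) →ₗ[ℂ] EuclideanSpace ℂ (Fin n)) (e₀ : ℂ))
    (hPSD : ∀ x, e₀ * ‖x‖ ^ 2 ≤ (⟪x, h x⟫_ℂ).re)
    (hgap : e₀ < e₁)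
    (he₁ : Module.End.HasEigenvalue (h : EuclideanSpace ℂ (Fin n) →ₗ[ℂ] EuclideanSpace ℂ (Fin n)) (e₁ : ℂ))
    (hfirst : ∀ μ : ℝ,
      Module.End.HasEigenvalue (h : EuclideanSpace ℂ (Fin n) →ₗ[ℂ] EuclideanSpace ℂ (Fin n)) (μ : ℂ) →
      μ ≠ e₀ → e₁ ≤ μ) :
    ∀ μ : ℝ,
      Module.End.HasEigenvalue
        ((h + δh : EuclideanSpace ℂ (Fin n) →L[ℂ] EuclideanSpace ℂ (Fin n)) :
          EuclideanSpace ℂ (Fin n) →ₗ[ℂ] EuclideanSpace ℂ (Fin n)) (μ : ℂ) →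
      ∃ ψ₀ ∈ Module.End.eigenspace
          (h : EuclideanSpace ℂ (Fin n) →ₗ[ℂ] EuclideanSpace ℂ (Fin n)) (e₀ : ℂ),
        ‖ψ₀‖ = 1 ∧
        e₀ + (e₁ - e₀) * (⟪ψ₀, δh ψ₀⟫_ℂ).re /
          ((e₁ - e₀) + (⟪ψ₀, δh ψ₀⟫_ℂ).re + ‖δh‖) ≤ μ :=
  eigenvalue_bound_sum_of_hamiltonians_general h δh hh hδh hδhpos e₀ e₁ he₀ hPSD hgap hfirst
end

section
/- For the path graph on N₁ vertices (N₁ even, vertices 1,…,N₁ with edges between consecutive vertices), any real function φ orthogonal to constants (Σφ = 0, φ ≠ 0) satisfies the Rayleigh quotient bound Σ_{k=1}^{N₁−1} |φ(k)−φ(k+1)|² / Σ_{k=1}^{N₁} |φ(k)|² ≥ 2/(2N₁+1)². -/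
/-! If `∑ f = 0`, each value `f k` has some `f j` of the opposite sign, so `f k ^ 2 ≤ (f k - f j) ^ 2`.
In a connected graph on `n` vertices, `k` and `j` are joined by a path of length at most `n - 1`,
and Cauchy–Schwarz along it bounds `(f k - f j) ^ 2` by `(n - 1)` times the Laplacian energy.
Hence `∑ f ^ 2 ≤ n (n - 1) · lapNum G f`, and `1 / (n (n - 1))` exceeds `2 / (2n + 1) ^ 2`. -/

open scoped Classical BigOperators

/-- Rayleigh numerator of the graph Laplacian: `∑_{i∼i'} (f i - f i')²`. -/
noncomputable def lapNum {V : Type*} [Fintype V] (G : SimpleGraph V) (f : V → ℝ) : ℝ :=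
  (∑ i, ∑ j, if G.Adj i j then (f i - f j) ^ 2 else 0) / 2

theorem add_sq_le_add_one_mul {a b L S : ℝ} (hL : 0 ≤ L) (hS : 0 ≤ S) (hb : b ^ 2 ≤ L * S) :
    (a + b) ^ 2 ≤ (L + 1) * (a ^ 2 + S) := by
  rcases hL.eq_or_lt with rfl | hL
  · nlinarith [sq_nonneg b]
  · nlinarith [sq_nonneg (L * a - b), mul_le_mul_of_nonneg_left hb (by linarith : 0 ≤ L + 1)]

theorem exists_sq_le_sq_sub_of_sum_eq_zero {ι : Type*} [Fintype ι] {f : ι → ℝ}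
    (hf : ∑ i, f i = 0) (k : ι) : ∃ j, f k ^ 2 ≤ (f k - f j) ^ 2 := by
  have hne : (Finset.univ : Finset ι).Nonempty := ⟨k, Finset.mem_univ k⟩
  rcases le_total 0 (f k) with hk | hk
  · obtain ⟨j, -, hj⟩ := Finset.exists_le_of_sum_le (f := f) (g := fun _ => 0) hne (by simp [hf])
    exact ⟨j, by nlinarith [show f j ≤ 0 from hj]⟩
  · obtain ⟨j, -, hj⟩ := Finset.exists_le_of_sum_le (f := fun _ => 0) (g := f) hne (by simp [hf])
    exact ⟨j, by nlinarith [show 0 ≤ f j from hj]⟩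

namespace SimpleGraph

variable {V : Type*} {G : SimpleGraph V}

theorem lapNum_eq_sum_dart [Fintype V] (f : V → ℝ) :
    lapNum G f = (∑ d : G.Dart, (f d.fst - f d.snd) ^ 2) / 2 := by
  rw [lapNum, ← Fintype.sum_prod_type', ← Finset.sum_filter]
  congr 1
  refine Finset.sum_bij' (fun p hp => ⟨p, (Finset.mem_filter.1 hp).2⟩) (fun d _ => d.toProd)
    ?_ ?_ ?_ ?_ ?_ <;> simp

theorem lapNum_nonneg [Fintype V] (f : V → ℝ) : 0 ≤ lapNum G f := by
  rw [lapNum_eq_sum_dart]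
  positivity

namespace Walk

def energy (f : V → ℝ) {u v : V} (p : G.Walk u v) : ℝ :=
  (p.darts.map fun d => (f d.fst - f d.snd) ^ 2).sum

variable (f : V → ℝ) {u v : V}

theorem energy_nonneg (p : G.Walk u v) : 0 ≤ p.energy f :=
  List.sum_nonneg (by simp [sq_nonneg])

theorem energy_cons {w : V} (h : G.Adj u w) (p : G.Walk w v) :
    (cons h p).energy f = (f u - f w) ^ 2 + p.energy f := by
  simp [energy]

theorem sq_sub_le_length_mul_energy (p : G.Walk u v) :
    (f u - f v) ^ 2 ≤ p.length * p.energy f := by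
  induction p with
  | nil => simp
  | @cons u w v h p ih =>
    rw [energy_cons, length_cons, Nat.cast_succ, ← sub_add_sub_cancel (f u) (f w)]
    exact add_sq_le_add_one_mul p.length.cast_nonneg (p.energy_nonneg f) ih

theorem IsTrail.nodup_darts_append_darts_reverse {p : G.Walk u v} (hp : p.IsTrail) :
    (p.darts ++ p.reverse.darts).Nodup := by
  refine List.nodup_append.2 ⟨hp.edges_nodup.of_map _, (hp.reverse _).edges_nodup.of_map _,
    fun d hd d' hd' hdd' => ?_⟩
  subst hdd'
  rw [mem_darts_reverse] at hd'
  exact d.symm_ne (List.inj_on_of_nodup_map hp.edges_nodup hd' hd d.edge_symm)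

-- Each edge of a trail contributes both of its darts to the dart sum `2 * lapNum G f`.
theorem IsTrail.energy_le_lapNum [Fintype V] {p : G.Walk u v} (hp : p.IsTrail) :
    p.energy f ≤ lapNum G f := by
  set g : G.Dart → ℝ := fun d => (f d.fst - f d.snd) ^ 2
  have hg : g ∘ Dart.symm = g := funext fun d => sub_sq_comm _ _
  calc p.energy f = ((p.darts ++ p.reverse.darts).map g).sum / 2 := by
        rw [darts_reverse, List.map_append, List.map_reverse, List.map_map, hg, List.sum_append,
          List.sum_reverse, energy]
        ring
    _ = (∑ d ∈ (p.darts ++ p.reverse.darts).toFinset, g d) / 2 := by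
        rw [List.sum_toFinset _ hp.nodup_darts_append_darts_reverse]
    _ ≤ (∑ d, g d) / 2 := by
        gcongr
        exact Finset.subset_univ _
    _ = lapNum G f := (lapNum_eq_sum_dart f).symm

end Walk

theorem Preconnected.sq_sub_le_mul_lapNum [Fintype V] (hG : G.Preconnected) (f : V → ℝ)
    (u v : V) : (f u - f v) ^ 2 ≤ (Fintype.card V - 1 : ℕ) * lapNum G f := by
  obtain ⟨p, hp⟩ := hG.exists_isPath u v
  have hlen : p.length ≤ Fintype.card V - 1 := Nat.le_sub_one_of_lt hp.length_lt
  calc (f u - f v) ^ 2 ≤ p.length * p.energy f := p.sq_sub_le_length_mul_energy f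
    _ ≤ (Fintype.card V - 1 : ℕ) * lapNum G f :=
        mul_le_mul (by exact_mod_cast hlen) (hp.isTrail.energy_le_lapNum f)
          (p.energy_nonneg f) (Nat.cast_nonneg _)

theorem Preconnected.sum_sq_le_mul_lapNum [Fintype V] (hG : G.Preconnected) {f : V → ℝ}
    (hf : ∑ i, f i = 0) :
    ∑ i, f i ^ 2 ≤ Fintype.card V * (Fintype.card V - 1 : ℕ) * lapNum G f := by
  calc ∑ i, f i ^ 2
      ≤ ∑ _i : V, ((Fintype.card V - 1 : ℕ) * lapNum G f) := by
        refine Finset.sum_le_sum fun i _ => ?_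
        obtain ⟨j, hj⟩ := exists_sq_le_sq_sub_of_sum_eq_zero hf i
        exact hj.trans (hG.sq_sub_le_mul_lapNum f i j)
    _ = Fintype.card V * (Fintype.card V - 1 : ℕ) * lapNum G f := by
        rw [Finset.sum_const, Finset.card_univ, nsmul_eq_mul, mul_assoc]

end SimpleGraph

theorem path_graph_rayleigh_bound_general (N₁ : ℕ)
    (φ : Fin N₁ → ℝ) (hφ0 : ∑ k, φ k = 0) (hφne : φ ≠ 0) :
    2 / ((2 * (N₁ : ℝ) + 1) ^ 2) ≤
      lapNum (SimpleGraph.pathGraph N₁) φ / ∑ k, (φ k) ^ 2 := by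
  obtain ⟨k, hk⟩ := Function.ne_iff.1 hφne
  have hpos : 0 < ∑ k, φ k ^ 2 :=
    Finset.sum_pos' (fun i _ => sq_nonneg (φ i)) ⟨k, Finset.mem_univ k, pow_two_pos_of_ne_zero hk⟩
  have hbound := (SimpleGraph.pathGraph_preconnected N₁).sum_sq_le_mul_lapNum hφ0
  rw [Fintype.card_fin] at hbound
  have hlap := SimpleGraph.lapNum_nonneg (G := SimpleGraph.pathGraph N₁) φ
  have hN : ((N₁ - 1 : ℕ) : ℝ) ≤ N₁ := by exact_mod_cast N₁.sub_le 1
  rw [div_le_div_iff₀ (by positivity) hpos]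
  nlinarith [mul_le_mul_of_nonneg_left hN (N₁.cast_nonneg (α := ℝ))]

/-- **Example 1: 1-dimensional chain.**  For the path graph on `N₁` vertices (`N₁` even),
any nonzero mean-zero real function `φ` satisfies the Rayleigh quotient bound
`E_φ ≥ 2 / (2N₁ + 1)²`. -/
theorem path_graph_rayleigh_bound (N₁ : ℕ) (hN : Even N₁)
    (φ : Fin N₁ → ℝ) (hφ0 : ∑ k, φ k = 0) (hφne : φ ≠ 0) :
    2 / ((2 * (N₁ : ℝ) + 1) ^ 2) ≤
      lapNum (SimpleGraph.pathGraph N₁) φ / ∑ k, (φ k) ^ 2 :=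
  path_graph_rayleigh_bound_general N₁ φ hφ0 hφne
end

section
/- For the Cartesian product of M path graphs on N₁, …, N_M vertices (each N_a even), any real function φ with Σφ = 0 and φ ≠ 0 satisfies E_φ ≥ 2/((2(N₁+⋯+N_M)+1)(2·max(N₁,…,N_M)+1)). -/
open scoped Classical BigOperators

/-- The `M`-dimensional grid graph: the Cartesian product of path graphs on
`N 0, …, N (M-1)` vertices.  Two vertices are adjacent iff they differ in exactly one
coordinate, and in that coordinate they are adjacent in the path graph. -/
def gridGraph (M : ℕ) (N : Fin M → ℕ) : SimpleGraph (∀ a, Fin (N a)) where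
  Adj i j := ∃ a, (SimpleGraph.pathGraph (N a)).Adj (i a) (j a) ∧ ∀ b, b ≠ a → i b = j b
  symm := by
    constructor
    rintro i j ⟨a, h, hb⟩
    exact ⟨a, h.symm, fun b hba => (hb b hba).symm⟩
  loopless := by
    constructor
    rintro i ⟨a, h, -⟩
    exact h.ne rfl

/-!
Canonical paths. Go from `i` to `j` by changing the coordinates one at a time in increasing
order, through the hybrids `hybrid i j t` (coordinates below `t` from `j`, the others from `i`).
The `a`-th step moves along a line of `N a` points in direction `a`, so two Cauchy–Schwarz
inequalities bound `(φ i - φ j)²` by `∑ N_a` times the sum over `a` of the energy of `φ` on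
the line in direction `a` through the `a`-th hybrid. Summed over all pairs, the left side is
`2 |V| ∑ φ²` since `∑ φ = 0`; on the right, `(i, j) ↦ hybrid i j a` is `|V|`-to-one and each
edge in direction `a` is counted once for each of the `N a` points of its line. This gives
`2 ∑ φ² ≤ S T · lapNum` with `S = ∑ N_a`, `T = max N_a`, and `2 / (S T)` exceeds the bound.
-/

open Finset Function

lemma sq_sub_le_mul_sum_sq_sub_succ (g : ℕ → ℝ) {m x y : ℕ} (hx : x ≤ m) (hy : y ≤ m) :
    (g x - g y) ^ 2 ≤ m * ∑ k ∈ range m, (g k - g (k + 1)) ^ 2 := by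
  wlog hxy : x ≤ y generalizing x y
  · rw [sub_sq_comm]
    exact this hy hx (le_of_not_ge hxy)
  have htel : g x - g y = -∑ k ∈ Ico x y, (g (k + 1) - g k) := by
    rw [sum_Ico_sub _ hxy]; ring
  calc (g x - g y) ^ 2 = (∑ k ∈ Ico x y, (g (k + 1) - g k)) ^ 2 := by rw [htel, neg_sq]
    _ ≤ #(Ico x y) * ∑ k ∈ Ico x y, (g (k + 1) - g k) ^ 2 := sq_sum_le_card_mul_sum_sq
    _ ≤ m * ∑ k ∈ range m, (g k - g (k + 1)) ^ 2 := by
        simp_rw [sub_sq_comm (g _) (g (_ + 1))]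
        gcongr
        · rw [Nat.card_Ico]; omega
        · intro k hk; simp only [mem_Ico, mem_range] at hk ⊢; omega

def fwdDiffSq {n : ℕ} (f : Fin n → ℝ) (k : Fin n) : ℝ :=
  if h : (k : ℕ) + 1 < n then (f k - f ⟨k + 1, h⟩) ^ 2 else 0

lemma fwdDiffSq_nonneg {n : ℕ} (f : Fin n → ℝ) (k : Fin n) : 0 ≤ fwdDiffSq f k := by
  unfold fwdDiffSq; split_ifs <;> positivity

lemma sq_sub_le_mul_sum_fwdDiffSq {n : ℕ} (f : Fin n → ℝ) (x y : Fin n) :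
    (f x - f y) ^ 2 ≤ n * ∑ k, fwdDiffSq f k := by
  set g : ℕ → ℝ := fun k => if h : k < n then f ⟨k, h⟩ else 0
  have hg : ∀ k : Fin n, g k = f k := fun k => dif_pos k.isLt
  have hsum : ∑ k ∈ range (n - 1), (g k - g (k + 1)) ^ 2 ≤ ∑ k, fwdDiffSq f k := by
    have hedge : ∀ k : Fin n,
        fwdDiffSq f k = if (k : ℕ) + 1 < n then (g k - g (k + 1)) ^ 2 else 0 := by
      intro k
      unfold fwdDiffSq
      split_ifs with h
      · rw [hg, show g (k + 1) = f ⟨k + 1, h⟩ from dif_pos h]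
      · rfl
    rw [Fintype.sum_congr _ _ hedge,
      Fin.sum_univ_eq_sum_range (fun k => if k + 1 < n then (g k - g (k + 1)) ^ 2 else 0)]
    calc ∑ k ∈ range (n - 1), (g k - g (k + 1)) ^ 2
        = ∑ k ∈ range (n - 1), if k + 1 < n then (g k - g (k + 1)) ^ 2 else 0 :=
          sum_congr rfl fun k hk => (if_pos (by rw [mem_range] at hk; omega)).symm
      _ ≤ ∑ k ∈ range n, if k + 1 < n then (g k - g (k + 1)) ^ 2 else 0 :=
          sum_le_sum_of_subset_of_nonneg (range_subset_range.2 (by omega))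
            fun _ _ _ => by split_ifs <;> positivity
  calc (f x - f y) ^ 2 = (g x - g y) ^ 2 := by rw [hg, hg]
    _ ≤ ((n - 1 : ℕ) : ℝ) * ∑ k ∈ range (n - 1), (g k - g (k + 1)) ^ 2 :=
        sq_sub_le_mul_sum_sq_sub_succ g (by omega) (by omega)
    _ ≤ n * ∑ k, fwdDiffSq f k :=
        mul_le_mul (by exact_mod_cast n.sub_le 1) hsum (sum_nonneg fun _ _ => sq_nonneg _)
          n.cast_nonneg

section Pi

variable {ι : Type*} [Fintype ι] [DecidableEq ι] {β : ι → Type*} [∀ a, Fintype (β a)]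
  {R : Type*} [AddCommMonoid R]

lemma sum_sum_piecewise (s : Finset ι) (F : (∀ a, β a) → R) :
    ∑ i, ∑ j, F (s.piecewise j i) = Fintype.card (∀ a, β a) • ∑ v, F v := by
  have hswap : Involutive fun p : (∀ a, β a) × (∀ a, β a) =>
      (s.piecewise p.2 p.1, s.piecewise p.1 p.2) := by
    intro p
    ext a <;> by_cases ha : a ∈ s <;> simp [ha]
  calc ∑ i, ∑ j, F (s.piecewise j i)
        = ∑ p : (∀ a, β a) × (∀ a, β a), F (hswap.toPerm _ p).1 :=
        (Fintype.sum_prod_type' fun i j => F (s.piecewise j i)).symm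
    _ = ∑ p, F (Prod.fst p) := Equiv.sum_comp (hswap.toPerm _) fun p => F (Prod.fst p)
    _ = _ := by rw [Fintype.sum_prod_type]; simp [smul_sum]

lemma sum_sum_update (a : ι) (F : (∀ a, β a) → R) :
    ∑ v, ∑ x : β a, F (update v a x) = Fintype.card (β a) • ∑ v, F v := by
  have hswap : Involutive fun p : (∀ a, β a) × β a => (update p.1 a p.2, p.1 a) := by
    intro p
    ext <;> simp
  calc ∑ v, ∑ x : β a, F (update v a x)
        = ∑ p : (∀ a, β a) × β a, F (hswap.toPerm _ p).1 :=
        (Fintype.sum_prod_type' fun v x => F (update v a x)).symm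
    _ = ∑ p, F (Prod.fst p) := Equiv.sum_comp (hswap.toPerm _) fun p => F (Prod.fst p)
    _ = _ := by rw [Fintype.sum_prod_type]; simp [smul_sum]

end Pi

section Hybrid

variable {M : ℕ} {β : Fin M → Type*}

def hybrid (i j : ∀ a, β a) (t : ℕ) : ∀ a, β a :=
  (univ.filter fun b : Fin M => (b : ℕ) < t).piecewise j i

lemma hybrid_zero (i j : ∀ a, β a) : hybrid i j 0 = i := by
  ext b; simp [hybrid]

lemma hybrid_dim (i j : ∀ a, β a) : hybrid i j M = j := by
  ext b; simp [hybrid]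

lemma hybrid_apply_self (i j : ∀ a, β a) (a : Fin M) : hybrid i j a a = i a := by
  simp [hybrid]

lemma update_hybrid (i j : ∀ a, β a) (a : Fin M) :
    update (hybrid i j a) a (j a) = hybrid i j (a + 1) := by
  ext b
  rcases eq_or_ne b a with rfl | hb
  · simp [hybrid]
  · have hlt : (b : ℕ) < a + 1 ↔ (b : ℕ) < a := by
      have := Fin.val_ne_of_ne hb; omega
    simp only [update_of_ne hb, hybrid, piecewise, mem_filter, mem_univ, true_and, hlt]

lemma sum_sub_hybrid {G : Type*} [AddCommGroup G] (φ : (∀ a, β a) → G) (i j : ∀ a, β a) :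
    ∑ a : Fin M, (φ (hybrid i j a) - φ (hybrid i j (a + 1))) = φ i - φ j := by
  rw [Fin.sum_univ_eq_sum_range (fun t => φ (hybrid i j t) - φ (hybrid i j (t + 1))),
    sum_range_sub', hybrid_zero, hybrid_dim]

end Hybrid

lemma sum_sum_sub_sq_of_sum_eq_zero {V : Type*} [Fintype V] {f : V → ℝ} (hf : ∑ i, f i = 0) :
    ∑ i, ∑ j, (f i - f j) ^ 2 = 2 * Fintype.card V * ∑ i, f i ^ 2 := by
  simp only [sub_sq, sum_add_distrib, sum_sub_distrib, ← mul_sum, ← sum_mul, hf, sum_const,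
    card_univ, nsmul_eq_mul]
  ring

section Grid

variable {M : ℕ} {N : Fin M → ℕ}

def gridEdgeSq (φ : (∀ a, Fin (N a)) → ℝ) (a : Fin M) (v : ∀ a, Fin (N a)) : ℝ :=
  fwdDiffSq (fun x => φ (update v a x)) (v a)

lemma gridEdgeSq_nonneg (φ : (∀ a, Fin (N a)) → ℝ) (a : Fin M) (v : ∀ a, Fin (N a)) :
    0 ≤ gridEdgeSq φ a v :=
  fwdDiffSq_nonneg _ _

lemma sq_sub_le_sum_mul_sum_gridEdgeSq (φ : (∀ a, Fin (N a)) → ℝ) (i j : ∀ a, Fin (N a)) :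
    (φ i - φ j) ^ 2 ≤
      (∑ a, (N a : ℝ)) * ∑ a, ∑ x, gridEdgeSq φ a (update (hybrid i j a) a x) := by
  rw [← sum_sub_hybrid]
  refine sum_sq_le_sum_mul_sum_of_sq_le_mul _ (fun _ _ => Nat.cast_nonneg _)
    (fun a _ => sum_nonneg fun x _ => gridEdgeSq_nonneg φ a _) fun a _ => ?_
  have hline : ∑ x, gridEdgeSq φ a (update (hybrid i j a) a x) =
      ∑ x, fwdDiffSq (fun y => φ (update (hybrid i j a) a y)) x := by
    simp [gridEdgeSq]
  have hleft : update (hybrid i j a) a (i a) = hybrid i j a := by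
    rw [← hybrid_apply_self i j a, update_eq_self]
  rw [hline, ← update_hybrid]
  nth_rw 1 [← hleft]
  exact sq_sub_le_mul_sum_fwdDiffSq (fun y => φ (update (hybrid i j a) a y)) (i a) (j a)

def gridStep (a : Fin M) (i j : ∀ a, Fin (N a)) : Prop :=
  (i a : ℕ) + 1 = j a ∧ ∀ b ≠ a, i b = j b

lemma gridGraph_adj_iff {i j : ∀ a, Fin (N a)} :
    (gridGraph M N).Adj i j ↔ (∃ a, gridStep a i j) ∨ ∃ a, gridStep a j i := by
  simp only [gridGraph, SimpleGraph.pathGraph_adj, gridStep, or_and_right, exists_or,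
    eq_comm (a := j _)]

lemma gridStep.unique {a b : Fin M} {i j : ∀ a, Fin (N a)} (ha : gridStep a i j)
    (hb : gridStep b i j) : a = b := by
  by_contra hab
  have := ha.1
  rw [hb.2 a hab] at this
  omega

lemma gridStep.not_swap {a b : Fin M} {i j : ∀ a, Fin (N a)} (ha : gridStep a i j) :
    ¬ gridStep b j i := by
  intro hb
  have h₁ := ha.1
  have h₂ := hb.1
  rcases eq_or_ne a b with rfl | hab
  · omega
  · rw [hb.2 a hab] at h₁
    omega

lemma gridStep_iff {a : Fin M} {i j : ∀ a, Fin (N a)} :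
    gridStep a i j ↔ ∃ h : (i a : ℕ) + 1 < N a, j = update i a ⟨i a + 1, h⟩ := by
  constructor
  · rintro ⟨hup, hrest⟩
    refine ⟨hup ▸ (j a).isLt, funext fun b => ?_⟩
    rcases eq_or_ne b a with rfl | hb
    · rw [update_self]; exact Fin.ext hup.symm
    · simp [update_of_ne hb, hrest b hb]
  · rintro ⟨h, rfl⟩
    exact ⟨by simp, fun b hb => by simp [update_of_ne hb]⟩

lemma sum_ite_gridStep (φ : (∀ a, Fin (N a)) → ℝ) (a : Fin M) (i : ∀ a, Fin (N a)) :
    ∑ j, (if gridStep a i j then (φ i - φ j) ^ 2 else 0) = gridEdgeSq φ a i := by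
  simp only [gridStep_iff, gridEdgeSq, fwdDiffSq, update_eq_self]
  split_ifs with h <;> simp [h]

lemma lapNum_gridGraph (φ : (∀ a, Fin (N a)) → ℝ) :
    lapNum (gridGraph M N) φ = ∑ a, ∑ v, gridEdgeSq φ a v := by
  set U : (∀ a, Fin (N a)) → (∀ a, Fin (N a)) → ℝ :=
    fun i j => if ∃ a, gridStep a i j then (φ i - φ j) ^ 2 else 0
  have hadj : ∀ i j,
      (if (gridGraph M N).Adj i j then (φ i - φ j) ^ 2 else 0) = U i j + U j i := by
    intro i j
    by_cases hij : ∃ a, gridStep a i j <;> by_cases hji : ∃ a, gridStep a j i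
    · obtain ⟨⟨a, ha⟩, ⟨b, hb⟩⟩ := And.intro hij hji
      exact (ha.not_swap hb).elim
    all_goals simp [U, gridGraph_adj_iff, hij, hji, sub_sq_comm (φ i)]
  have hU : ∀ i j, U i j = ∑ a, if gridStep a i j then (φ i - φ j) ^ 2 else 0 := by
    intro i j
    by_cases hij : ∃ a, gridStep a i j
    · obtain ⟨a, ha⟩ := hij
      rw [sum_eq_single a (fun b _ hb => if_neg fun h => hb (h.unique ha)) (by simp), if_pos ha]
      exact if_pos ⟨a, ha⟩
    · rw [show U i j = 0 from if_neg hij]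
      exact (sum_eq_zero fun a _ => if_neg fun h => hij ⟨a, h⟩).symm
  calc lapNum (gridGraph M N) φ = (∑ i, ∑ j, U i j + ∑ i, ∑ j, U j i) / 2 := by
        simp only [lapNum, hadj, sum_add_distrib]
    _ = ∑ i, ∑ j, U i j := by rw [sum_comm (f := fun i j => U j i)]; ring
    _ = ∑ i, ∑ a, ∑ j, if gridStep a i j then (φ i - φ j) ^ 2 else 0 := by
        simp only [hU]; exact sum_congr rfl fun i _ => sum_comm
    _ = ∑ a, ∑ v, gridEdgeSq φ a v := by simp only [sum_ite_gridStep]; exact sum_comm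

theorem gridGraph_poincare {φ : (∀ a, Fin (N a)) → ℝ} (hφ0 : ∑ i, φ i = 0) :
    2 * ∑ i, φ i ^ 2 ≤
      (∑ a, (N a : ℝ)) * ((univ.sup N : ℕ) : ℝ) * lapNum (gridGraph M N) φ := by
  rcases isEmpty_or_nonempty (∀ a, Fin (N a)) with hV | hV
  · simp [lapNum]
  set S := ∑ a, (N a : ℝ)
  set T := ((univ.sup N : ℕ) : ℝ)
  set n := (Fintype.card (∀ a, Fin (N a)) : ℝ)
  have hn : 0 < n := Nat.cast_pos.2 Fintype.card_pos
  refine le_of_mul_le_mul_left ?_ hn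
  calc n * (2 * ∑ i, φ i ^ 2) = ∑ i, ∑ j, (φ i - φ j) ^ 2 := by
        rw [sum_sum_sub_sq_of_sum_eq_zero hφ0]; ring
    _ ≤ ∑ i, ∑ j, S * ∑ a, ∑ x, gridEdgeSq φ a (update (hybrid i j a) a x) := by
        gcongr with i _ j _
        exact sq_sub_le_sum_mul_sum_gridEdgeSq φ i j
    _ = S * ∑ a, ∑ i, ∑ j, ∑ x, gridEdgeSq φ a (update (hybrid i j a) a x) := by
        simp only [← mul_sum]
        exact congrArg _ ((sum_congr rfl fun i _ => sum_comm).trans sum_comm)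
    _ = S * ∑ a, n * (N a * ∑ v, gridEdgeSq φ a v) := by
        refine congrArg _ (sum_congr rfl fun a _ => ?_)
        unfold hybrid
        rw [sum_sum_piecewise _ fun v => ∑ x, gridEdgeSq φ a (update v a x), sum_sum_update,
          Fintype.card_fin, nsmul_eq_mul, nsmul_eq_mul]
    _ ≤ S * ∑ a, n * (T * ∑ v, gridEdgeSq φ a v) := by
        gcongr with a
        · exact sum_nonneg fun v _ => gridEdgeSq_nonneg φ a v
        · exact Nat.cast_le.2 (le_sup (f := N) (mem_univ a))
    _ = n * (S * T * lapNum (gridGraph M N) φ) := by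
        simp only [lapNum_gridGraph, ← mul_sum]
        ring

end Grid

theorem gridM_rayleigh_bound_general (M : ℕ) (N : Fin M → ℕ)
    (φ : (∀ a, Fin (N a)) → ℝ) (hφ0 : ∑ i, φ i = 0) (hφne : φ ≠ 0) :
    2 / ((2 * (∑ a, (N a : ℝ)) + 1) * (2 * ((Finset.univ.sup N : ℕ) : ℝ) + 1)) ≤
      lapNum (gridGraph M N) φ / ∑ i, (φ i) ^ 2 := by
  have hS : 0 ≤ ∑ a, (N a : ℝ) := sum_nonneg fun a _ => Nat.cast_nonneg _
  have hT : 0 ≤ ((Finset.univ.sup N : ℕ) : ℝ) := Nat.cast_nonneg _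
  have hL : 0 ≤ lapNum (gridGraph M N) φ := by
    rw [lapNum_gridGraph]
    exact sum_nonneg fun a _ => sum_nonneg fun v _ => gridEdgeSq_nonneg φ a v
  have hφsq : 0 < ∑ i, φ i ^ 2 := by
    obtain ⟨v, hv⟩ := Function.ne_iff.1 hφne
    exact sum_pos' (fun i _ => sq_nonneg (φ i)) ⟨v, mem_univ v, sq_pos_iff.2 hv⟩
  rw [div_le_div_iff₀ (by positivity) hφsq]
  calc 2 * ∑ i, φ i ^ 2
      ≤ (∑ a, (N a : ℝ)) * ((Finset.univ.sup N : ℕ) : ℝ) * lapNum (gridGraph M N) φ :=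
        gridGraph_poincare hφ0
    _ ≤ lapNum (gridGraph M N) φ *
          ((2 * (∑ a, (N a : ℝ)) + 1) * (2 * ((Finset.univ.sup N : ℕ) : ℝ) + 1)) := by
        nlinarith [mul_nonneg hS hT, mul_nonneg hS hL, mul_nonneg hT hL]

/-- **Example 3: M-dimensional chain.**  For the Cartesian product of `M` path graphs on
`N₁, …, N_M` vertices (each even), any nonzero mean-zero real function `φ` satisfies
`E_φ ≥ 2 / ((2(N₁+⋯+N_M)+1)(2 max(N₁,…,N_M)+1))`. -/
theorem gridM_rayleigh_bound (M : ℕ) (N : Fin M → ℕ) (hN : ∀ a, Even (N a))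
    (φ : (∀ a, Fin (N a)) → ℝ) (hφ0 : ∑ i, φ i = 0) (hφne : φ ≠ 0) :
    2 / ((2 * (∑ a, (N a : ℝ)) + 1) * (2 * ((Finset.univ.sup N : ℕ) : ℝ) + 1)) ≤
      lapNum (gridGraph M N) φ / ∑ i, (φ i) ^ 2 :=
  gridM_rayleigh_bound_general M N φ hφ0 hφne
end

section
/- Let v ∈ ℂ² be a unit vector and define the history state ψ = Σ_{i=0}^{N} e_i ⊗ (U_i ⋯ U_1 v) ∈ ℂ^{N+1} ⊗ ℂ², where U₁,…,U_N ∈ U(2) and e_i is the standard basis of ℂ^{N+1}. Then ψ is annihilated by each operator h_i = (|e_i⟩⟨e_i| + |e_{i−1}⟩⟨e_{i−1}|) ⊗ I − |e_i⟩⟨e_{i−1}| ⊗ U_i − |e_{i−1}⟩⟨e_i| ⊗ U_i†, each h_i is positive semi-definite, and ψ spans the joint kernel of {h_i : 1 ≤ i ≤ N} intersected with the space of states whose i=0 component is proportional to v. -/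
open scoped BigOperators

/-- The ordered product `U_k ⋯ U_1` of the first `k` gates (identity for `k = 0`). -/
noncomputable def prodU {N : ℕ} (U : Fin N → Matrix (Fin 2) (Fin 2) ℂ) :
    ℕ → Matrix (Fin 2) (Fin 2) ℂ
  | 0 => 1
  | k + 1 => (if h : k < N then U ⟨k, h⟩ else 1) * prodU U k

/-- The history state `ψ = ∑_{i=0}^N e_i ⊗ (U_i ⋯ U_1 v)`, viewed as a function
`Fin (N+1) → (Fin 2 → ℂ)` on the clock register with qubit-valued components. -/
noncomputable def historyState {N : ℕ} (U : Fin N → Matrix (Fin 2) (Fin 2) ℂ)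
    (v : Fin 2 → ℂ) : Fin (N + 1) → Fin 2 → ℂ :=
  fun i => (prodU U (i : ℕ)).mulVec v

/-- The gate operator
`h_i = (|e_i⟩⟨e_i| + |e_{i-1}⟩⟨e_{i-1}|) ⊗ I - |e_i⟩⟨e_{i-1}| ⊗ U_i - |e_{i-1}⟩⟨e_i| ⊗ U_i†`,
acting on `ℂ^{N+1} ⊗ ℂ² ≅ (Fin (N+1) → Fin 2 → ℂ)`; here the gate labelled by `i : Fin N`
couples clock sites `i.castSucc` (time `i-1`) and `i.succ` (time `i`). -/
noncomputable def gateOp {N : ℕ} (U : Matrix (Fin 2) (Fin 2) ℂ) (i : Fin N)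
    (f : Fin (N + 1) → Fin 2 → ℂ) : Fin (N + 1) → Fin 2 → ℂ := fun j =>
  (if j = i.succ then f i.succ - U.mulVec (f i.castSucc) else 0) +
    (if j = i.castSucc then f i.castSucc - U.conjTranspose.mulVec (f i.succ) else 0)

/-
Each `h_i` is the "transport defect" of `f` across the gate `U_i`: for an isometry `U`,
`⟨f, h_i f⟩ = ‖f_i - U f_{i-1}‖²`, so `h_i ≥ 0` and `h_i f = 0` iff `f_i = U f_{i-1}`.
The joint kernel is therefore the set of clock states obeying the recursion
`f_i = U_i f_{i-1}`, which is determined by `f_0`; the history state is the solution with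
`f_0 = v`.
-/

open Matrix
open scoped ComplexOrder

theorem prodU_succ {N : ℕ} (U : Fin N → Matrix (Fin 2) (Fin 2) ℂ) (i : Fin N) :
    prodU U (i + 1) = U i * prodU U i := by
  simp [prodU, i.isLt]

theorem historyState_succ {N : ℕ} (U : Fin N → Matrix (Fin 2) (Fin 2) ℂ) (v : Fin 2 → ℂ)
    (i : Fin N) : historyState U v i.succ = U i *ᵥ historyState U v i.castSucc := by
  rw [historyState, historyState, Fin.val_succ, Fin.val_castSucc, prodU_succ, mulVec_mulVec]

theorem gateOp_eq_zero_iff {N : ℕ} {U : Matrix (Fin 2) (Fin 2) ℂ} (hU : Uᴴ * U = 1)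
    (i : Fin N) (f : Fin (N + 1) → Fin 2 → ℂ) :
    gateOp U i f = 0 ↔ f i.succ = U *ᵥ f i.castSucc := by
  constructor
  · intro h
    have hsucc := congrFun h i.succ
    simp only [gateOp, (Fin.castSucc_lt_succ (i := i)).ne', if_true, if_false, add_zero,
      Pi.zero_apply, sub_eq_zero] at hsucc
    exact hsucc
  · intro h
    funext j
    simp only [gateOp, h, mulVec_mulVec, hU, one_mulVec, sub_self, ite_self, add_zero,
      Pi.zero_apply]

theorem sum_dotProduct_gateOp {N : ℕ} {U : Matrix (Fin 2) (Fin 2) ℂ} (hU : Uᴴ * U = 1)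
    (i : Fin N) (f : Fin (N + 1) → Fin 2 → ℂ) :
    ∑ j, star (f j) ⬝ᵥ gateOp U i f j =
      star (f i.succ - U *ᵥ f i.castSucc) ⬝ᵥ (f i.succ - U *ᵥ f i.castSucc) := by
  set x := f i.castSucc
  set y := f i.succ
  have hsum : ∑ j, star (f j) ⬝ᵥ gateOp U i f j =
      star y ⬝ᵥ (y - U *ᵥ x) + star x ⬝ᵥ (x - Uᴴ *ᵥ y) := by
    simp only [gateOp, dotProduct_add, Finset.sum_add_distrib, apply_ite (dotProduct _),
      dotProduct_zero, Finset.sum_ite_eq', Finset.mem_univ, if_true, x, y]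
  have hadj : star x ⬝ᵥ Uᴴ *ᵥ y = star (U *ᵥ x) ⬝ᵥ y := by
    rw [star_mulVec, dotProduct_mulVec]
  have hisom : star (U *ᵥ x) ⬝ᵥ U *ᵥ x = star x ⬝ᵥ x := by
    rw [star_mulVec, dotProduct_mulVec, vecMul_vecMul, hU, vecMul_one]
  rw [hsum]
  simp only [dotProduct_sub, sub_dotProduct, star_sub]
  rw [hadj, hisom]
  ring

theorem eq_of_succ_eq_mulVec {N : ℕ} (U : Fin N → Matrix (Fin 2) (Fin 2) ℂ)
    {f g : Fin (N + 1) → Fin 2 → ℂ} (hf : ∀ i, f i.succ = U i *ᵥ f i.castSucc)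
    (hg : ∀ i, g i.succ = U i *ᵥ g i.castSucc) (h0 : f 0 = g 0) : f = g := by
  funext j
  induction j using Fin.induction with
  | zero => exact h0
  | succ i ih => rw [hf, hg, ih]

theorem history_state_spans_kernel_general {N : ℕ}
    (U : Fin N → Matrix (Fin 2) (Fin 2) ℂ)
    (hU : ∀ i, U i ∈ Matrix.unitaryGroup (Fin 2) ℂ)
    (v : Fin 2 → ℂ) :
    (∀ i : Fin N, gateOp (U i) i (historyState U v) = 0) ∧
    (∀ (i : Fin N) (f : Fin (N + 1) → Fin 2 → ℂ),
      0 ≤ (∑ j, ∑ b, (starRingEnd ℂ) (f j b) * gateOp (U i) i f j b).re) ∧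
    (∀ f : Fin (N + 1) → Fin 2 → ℂ,
      (∀ i : Fin N, gateOp (U i) i f = 0) →
      (∃ c : ℂ, f 0 = c • v) →
      ∃ c : ℂ, f = c • historyState U v) := by
  have hUU : ∀ i, (U i)ᴴ * U i = 1 := fun i => mem_unitaryGroup_iff'.mp (hU i)
  refine ⟨fun i => (gateOp_eq_zero_iff (hUU i) i _).mpr (historyState_succ U v i),
    fun i f => ?_, fun f hf ⟨c, hc⟩ => ⟨c, ?_⟩⟩
  · change 0 ≤ (∑ j, star (f j) ⬝ᵥ gateOp (U i) i f j).re
    rw [sum_dotProduct_gateOp (hUU i)]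
    exact (Complex.nonneg_iff.mp (dotProduct_star_self_nonneg _)).1
  · refine eq_of_succ_eq_mulVec U (fun i => (gateOp_eq_zero_iff (hUU i) i f).mp (hf i))
      (fun i => ?_) (by simpa [historyState, prodU] using hc)
    simp only [Pi.smul_apply, historyState_succ, mulVec_smul]

/-- The history state is annihilated by each gate operator `h_i`; each `h_i` is positive
semi-definite; and the history state spans the joint kernel of the `h_i` intersected with
the space of states whose `i = 0` clock component is proportional to `v`. -/
theorem history_state_spans_kernel {N : ℕ}
    (U : Fin N → Matrix (Fin 2) (Fin 2) ℂ)
    (hU : ∀ i, U i ∈ Matrix.unitaryGroup (Fin 2) ℂ)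
    (v : Fin 2 → ℂ) (hv : ∑ b, ‖v b‖ ^ 2 = 1) :
    (∀ i : Fin N, gateOp (U i) i (historyState U v) = 0) ∧
    (∀ (i : Fin N) (f : Fin (N + 1) → Fin 2 → ℂ),
      0 ≤ (∑ j, ∑ b, (starRingEnd ℂ) (f j b) * gateOp (U i) i f j b).re) ∧
    (∀ f : Fin (N + 1) → Fin 2 → ℂ,
      (∀ i : Fin N, gateOp (U i) i f = 0) →
      (∃ c : ℂ, f 0 = c • v) →
      ∃ c : ℂ, f = c • historyState U v) :=
  history_state_spans_kernel_general U hU v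
end

section
/- For the single-qubit GSQC Hamiltonian with identity gates, H(λ) on ℂ^{N+1} given by the sum of hop terms h_i = |e_i − e_{i−1}|-projectors for 2 ≤ i ≤ N and the λ-dependent first hop h₁(λ) with matrix elements ⟨e₁|h₁|e₁⟩ = 1, ⟨e₀|h₁|e₀⟩ = λ², ⟨e₁|h₁|e₀⟩ = −λ: the unnormalized vector ψ_λ = e₀ + λ(e₁ + ⋯ + e_N) is the unique zero-energy ground state, and its normalized form satisfies |⟨e₀, ψ_λ⟩|²/‖ψ_λ‖² = 1/(1 + N λ²) ≥ 1/(N+1). -/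
/-!
`H(λ)` is a sum of rank-one terms `vᵢ vᵢᴴ`, so `⟨f, H f⟩ = ∑ᵢ |⟨vᵢ, f⟩|²` and `H f = 0` forces
every `⟨vᵢ, f⟩ = f (i+1) - cᵢ f i` to vanish. This recursion determines `f` from `f 0`, and `ψ_λ`
satisfies it, so the kernel is the line through `ψ_λ`. The weight formula is the count
`‖ψ_λ‖² = 1 + N λ²`, and `λ ≤ 1` gives the bound.
-/

open scoped BigOperators

/-- The single-qubit identity-gate GSQC Hamiltonian `H(λ)` on `ℂ^{N+1}`:
the sum over gates `i : Fin N` of the rank-one terms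
`(|e_{i+1}⟩ - c_i |e_i⟩)(⟨e_{i+1}| - c_i ⟨e_i|)` where `c_0 = λ` (the λ-dependent first hop,
with `⟨e₁|h₁|e₁⟩ = 1`, `⟨e₀|h₁|e₀⟩ = λ²`, `⟨e₁|h₁|e₀⟩ = -λ`) and `c_i = 1` for `i ≥ 1`. -/
noncomputable def chainH (N : ℕ) (lam : ℝ) (f : Fin (N + 1) → ℂ) : Fin (N + 1) → ℂ :=
  ∑ i : Fin N, (fun j =>
    (if j = i.succ then 1 else 0) *
        (f i.succ - (if (i : ℕ) = 0 then (lam : ℂ) else 1) * f i.castSucc) -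
      (if j = i.castSucc then 1 else 0) * (if (i : ℕ) = 0 then (lam : ℂ) else 1) *
        (f i.succ - (if (i : ℕ) = 0 then (lam : ℂ) else 1) * f i.castSucc))

/-- The unnormalized vector `ψ_λ = e₀ + λ(e₁ + ⋯ + e_N)`. -/
noncomputable def psiLam (N : ℕ) (lam : ℝ) : Fin (N + 1) → ℂ :=
  fun j => if j = 0 then 1 else (lam : ℂ)

open ComplexConjugate

section PathHop

variable {N : ℕ}

/-- `∑ᵢ vᵢ vᵢᴴ f` with `vᵢ = e_{i+1} - conj (c i) • eᵢ`, so that `⟨vᵢ, f⟩ = f (i+1) - c i * f i`. -/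
def pathHop (c : Fin N → ℂ) (f : Fin (N + 1) → ℂ) : Fin (N + 1) → ℂ :=
  ∑ i : Fin N, fun j =>
    (if j = i.succ then 1 else 0) * (f i.succ - c i * f i.castSucc) -
      (if j = i.castSucc then 1 else 0) * conj (c i) * (f i.succ - c i * f i.castSucc)

theorem sum_conj_mul_pathHop (c : Fin N → ℂ) (f : Fin (N + 1) → ℂ) :
    ∑ j, conj (f j) * pathHop c f j = ∑ i, (Complex.normSq (f i.succ - c i * f i.castSucc) : ℂ) := by
  simp only [pathHop, Finset.sum_apply, Finset.mul_sum]
  rw [Finset.sum_comm]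
  refine Finset.sum_congr rfl fun i _ => ?_
  simp only [mul_sub, Finset.sum_sub_distrib, mul_ite, mul_zero, ite_mul, zero_mul,
    Finset.sum_ite_eq', Finset.mem_univ, if_true, Complex.normSq_eq_conj_mul_self, map_sub, map_mul]
  ring

theorem pathHop_eq_zero_iff (c : Fin N → ℂ) (f : Fin (N + 1) → ℂ) :
    pathHop c f = 0 ↔ ∀ i, f i.succ = c i * f i.castSucc := by
  constructor
  · intro hf i
    have hform := sum_conj_mul_pathHop c f
    simp only [hf, Pi.zero_apply, mul_zero, Finset.sum_const_zero] at hform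
    have hsum : ∑ i, Complex.normSq (f i.succ - c i * f i.castSucc) = 0 := by
      exact_mod_cast hform.symm
    rw [Finset.sum_eq_zero_iff_of_nonneg fun _ _ => Complex.normSq_nonneg _] at hsum
    exact sub_eq_zero.mp (Complex.normSq_eq_zero.mp (hsum i (Finset.mem_univ i)))
  · intro h
    refine Finset.sum_eq_zero fun i _ => ?_
    funext j
    simp [h i]

theorem eq_smul_of_forall_succ_eq_mul (c : Fin N → ℂ) {f g : Fin (N + 1) → ℂ} (hg0 : g 0 = 1)
    (hf : ∀ i, f i.succ = c i * f i.castSucc) (hg : ∀ i, g i.succ = c i * g i.castSucc) :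
    f = f 0 • g := by
  funext j
  induction j using Fin.induction with
  | zero => simp [hg0]
  | succ i ih =>
    simp only [Pi.smul_apply, smul_eq_mul] at ih ⊢
    rw [hf, hg, ih]
    ring

end PathHop

def hopCoeff {N : ℕ} (lam : ℝ) (i : Fin N) : ℂ := if (i : ℕ) = 0 then (lam : ℂ) else 1

theorem chainH_eq_pathHop (N : ℕ) (lam : ℝ) : chainH N lam = pathHop (hopCoeff lam) := by
  have hconj : ∀ i : Fin N, conj (hopCoeff lam i) = hopCoeff lam i := by
    intro i; unfold hopCoeff; split_ifs <;> simp
  funext f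
  simp only [chainH, pathHop, hconj]
  rfl

theorem psiLam_succ (N : ℕ) (lam : ℝ) (i : Fin N) :
    psiLam N lam i.succ = hopCoeff lam i * psiLam N lam i.castSucc := by
  by_cases h : (i : ℕ) = 0 <;> simp [psiLam, hopCoeff, h, Fin.ext_iff]

theorem sum_norm_sq_psiLam (N : ℕ) (lam : ℝ) :
    ∑ j, ‖psiLam N lam j‖ ^ 2 = 1 + N * lam ^ 2 := by
  simp [Fin.sum_univ_succ, psiLam, Fin.succ_ne_zero]

theorem chainH_ground_state_general (N : ℕ) (lam : ℝ)
    (hlam0 : 0 < lam) (hlam1 : lam ≤ 1) :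
    chainH N lam (psiLam N lam) = 0 ∧
    (∀ f : Fin (N + 1) → ℂ, chainH N lam f = 0 → ∃ c : ℂ, f = c • psiLam N lam) ∧
    ‖psiLam N lam 0‖ ^ 2 / ∑ j, ‖psiLam N lam j‖ ^ 2 = 1 / (1 + N * lam ^ 2) ∧
    (1 : ℝ) / (1 + N * lam ^ 2) ≥ 1 / (N + 1) := by
  rw [chainH_eq_pathHop]
  refine ⟨(pathHop_eq_zero_iff _ _).mpr (psiLam_succ N lam), fun f hf => ⟨f 0, ?_⟩, ?_, ?_⟩
  · exact eq_smul_of_forall_succ_eq_mul _ (by simp [psiLam])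
      ((pathHop_eq_zero_iff _ _).mp hf) (psiLam_succ N lam)
  · rw [sum_norm_sq_psiLam]
    simp [psiLam]
  · have hlam_sq : lam ^ 2 ≤ 1 := by nlinarith
    exact one_div_le_one_div_of_le (by positivity) (by nlinarith)

/-- `ψ_λ` is the unique zero-energy ground state of the single-qubit GSQC Hamiltonian with
identity gates, and its normalized `e₀`-weight is
`|⟨e₀, ψ_λ⟩|²/‖ψ_λ‖² = 1/(1 + Nλ²) ≥ 1/(N+1)`. -/
theorem chainH_ground_state (N : ℕ) (hN : 1 ≤ N) (lam : ℝ)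
    (hlam0 : 0 < lam) (hlam1 : lam ≤ 1) :
    chainH N lam (psiLam N lam) = 0 ∧
    (∀ f : Fin (N + 1) → ℂ, chainH N lam f = 0 → ∃ c : ℂ, f = c • psiLam N lam) ∧
    ‖psiLam N lam 0‖ ^ 2 / ∑ j, ‖psiLam N lam j‖ ^ 2 = 1 / (1 + N * lam ^ 2) ∧
    (1 : ℝ) / (1 + N * lam ^ 2) ≥ 1 / (N + 1) :=
  chainH_ground_state_general N lam hlam0 hlam1
end
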